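/- arXiv:1304.1917 — 3 statements merged into one kernel-verified Lean document; each statement's English description precedes it below -/
import Mathlib

section
/- Let F be an algebraically closed field of characteristic zero and let t ∈ F be an element with t - 1 not an integer (i.e., t - 1 is not in the image of ℤ in F). Then there is no rational function r ∈ F(x) satisfying x·r' + (t - 1 - x)·r = x, where r' denotes the derivative of r with respect to x. -/
/-! Write `r = p / q` in lowest terms with `q` monic. Clearing denominators gives
`X (p'q - pq') + (c - X) p q = X q²` with `c = t - 1`, so `q ∣ X q'`, which forces `q = Xⁿ`
(comparing coefficients, `k q_k = n q_k` for all `k`). Cancelling `q` leaves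
`X p' + (c - n - X) p = Xⁿ⁺¹`: comparing degrees gives `deg p = n`, and evaluating at `0` gives
`(c - n) p(0) = 0`, so `X ∣ p` because `c ≠ n`. Hence `n ≥ 1`, and `X` divides both `p`
and `q`. -/

open Polynomial

namespace Polynomial

variable {R : Type*} [CommRing R]

theorem coeff_X_mul_derivative (p : R[X]) (k : ℕ) :
    (X * derivative p).coeff k = k * p.coeff k := by
  cases k with
  | zero => simp
  | succ k => rw [coeff_X_mul, coeff_derivative]; push_cast; ring

theorem natDegree_X_mul_derivative_le (p : R[X]) :
    (X * derivative p).natDegree ≤ p.natDegree := by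
  rcases eq_or_ne p.natDegree 0 with hp | hp
  · have : derivative p = 0 := by rw [eq_C_of_natDegree_eq_zero hp, derivative_C]
    simp [this]
  · have := natDegree_derivative_lt hp
    have := natDegree_mul_le (p := X) (q := derivative p)
    have := natDegree_X_le (R := R)
    omega

theorem X_mul_derivative_X_pow (n : ℕ) :
    X * derivative (X ^ n : R[X]) = C (n : R) * X ^ n := by
  rcases n with _ | n
  · simp
  · rw [derivative_X_pow, Nat.add_sub_cancel]
    ring

theorem eval_zero_X_mul_derivative_add_C_sub_X_mul (c : R) (p : R[X]) :
    (X * derivative p + (C c - X) * p).eval 0 = c * p.eval 0 := by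
  simp

theorem natDegree_X_mul_derivative_add_C_sub_X_mul [Nontrivial R] (c : R) {p : R[X]}
    (hp : p ≠ 0) : (X * derivative p + (C c - X) * p).natDegree = p.natDegree + 1 := by
  have hlow : (X * derivative p + C c * p).natDegree ≤ p.natDegree :=
    natDegree_add_le_of_degree_le (natDegree_X_mul_derivative_le p) (natDegree_C_mul_le c p)
  rw [show X * derivative p + (C c - X) * p = X * derivative p + C c * p - X * p by ring,
    natDegree_sub_eq_right_of_natDegree_lt] <;> rw [natDegree_X_mul hp]
  omega

theorem Monic.eq_X_pow_of_dvd_X_mul_derivative [IsDomain R] [CharZero R] {q : R[X]}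
    (hq : q.Monic) (h : q ∣ X * derivative q) : q = X ^ q.natDegree := by
  obtain ⟨u, hu⟩ := h
  have hu0 : u.natDegree = 0 := by
    rcases eq_or_ne u 0 with rfl | hu0
    · rfl
    · have := natDegree_X_mul_derivative_le q
      rw [hu, hq.natDegree_mul' hu0] at this
      omega
  rw [eq_C_of_natDegree_eq_zero hu0] at hu
  have hcoeff (k : ℕ) : (k : R) * q.coeff k = q.coeff k * u.coeff 0 := by
    rw [← coeff_X_mul_derivative, hu, coeff_mul_C]
  have hc : u.coeff 0 = q.natDegree := by
    simpa [hq.coeff_natDegree] using (hcoeff q.natDegree).symm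
  ext k
  rw [coeff_X_pow]
  split_ifs with hk
  · rw [hk, hq.coeff_natDegree]
  · have : ((k : R) - q.natDegree) * q.coeff k = 0 := by
      linear_combination hcoeff k + q.coeff k * hc
    exact (mul_eq_zero.mp this).resolve_left (sub_ne_zero.mpr (Nat.cast_injective.ne hk))

end Polynomial

theorem IsCoprime.X_mul_derivative_sub_add_C_sub_X_mul_ne {K : Type*} [Field K] [CharZero K]
    {c : K} (hc : ∀ n : ℕ, c ≠ n) {p q : K[X]} (hpq : IsCoprime p q) (hq : q.Monic) :
    X * (derivative p * q - p * derivative q) + (C c - X) * (p * q) ≠ X * q ^ 2 := by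
  intro h
  set n := q.natDegree
  have hqX : q = X ^ n := hq.eq_X_pow_of_dvd_X_mul_derivative <|
    hpq.symm.dvd_of_dvd_mul_right
      ⟨X * derivative p + (C c - X) * p - X * q, by linear_combination -h⟩
  have hq' : X * derivative q = C (n : K) * q := hqX ▸ X_mul_derivative_X_pow n
  have hred : X * derivative p + (C (c - n) - X) * p = X ^ (n + 1) := by
    refine mul_left_cancel₀ hq.ne_zero ?_
    rw [pow_succ', ← hqX, C_sub]
    linear_combination h + p * hq'
  have hp0 : p ≠ 0 := by
    rintro rfl
    simp only [derivative_zero, mul_zero, zero_add] at hred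
    exact pow_ne_zero _ X_ne_zero hred.symm
  have hdeg : p.natDegree = n := by
    have := congrArg natDegree hred
    rwa [natDegree_X_mul_derivative_add_C_sub_X_mul _ hp0, natDegree_X_pow,
      Nat.add_right_cancel_iff] at this
  have hXp : X ∣ p := by
    have := congrArg (eval 0) hred
    rw [eval_zero_X_mul_derivative_add_C_sub_X_mul] at this
    simpa [X_dvd_iff, coeff_zero_eq_eval_zero, sub_eq_zero, hc n] using this
  have hn : n ≠ 0 := by
    have := natDegree_le_of_dvd hXp hp0
    rw [natDegree_X, hdeg] at this
    omega
  exact not_isUnit_X (hpq.isUnit_of_dvd' hXp (hqX ▸ dvd_pow_self X hn))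

namespace RatFunc

variable {K : Type*} [Field K] {δ : Derivation K (RatFunc K) (RatFunc K)}

theorem derivation_algebraMap (hδ : δ X = 1) (p : K[X]) :
    δ (algebraMap K[X] (RatFunc K) p) = algebraMap K[X] (RatFunc K) (derivative p) := by
  rw [← aeval_X_left_eq_algebraMap, Derivation.comp_aeval_eq, hδ, smul_eq_mul, mul_one,
    aeval_X_left_eq_algebraMap]

theorem algebraMap_num_eq_mul_algebraMap_denom (r : RatFunc K) :
    algebraMap K[X] (RatFunc K) r.num = r * algebraMap K[X] (RatFunc K) r.denom :=
  (div_eq_iff (algebraMap_ne_zero r.denom_ne_zero)).mp r.num_div_denom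

theorem algebraMap_denom_sq_mul_derivation (hδ : δ X = 1) (r : RatFunc K) :
    algebraMap K[X] (RatFunc K) (r.denom ^ 2) * δ r =
      algebraMap K[X] (RatFunc K) (derivative r.num * r.denom - r.num * derivative r.denom) := by
  have hnum := algebraMap_num_eq_mul_algebraMap_denom r
  have hnum' := congrArg δ hnum
  rw [derivation_algebraMap hδ, Derivation.leibniz, derivation_algebraMap hδ, smul_eq_mul,
    smul_eq_mul] at hnum'
  simp only [map_pow, map_sub, map_mul]
  linear_combination (-algebraMap K[X] (RatFunc K) r.denom) * hnum'
    + algebraMap K[X] (RatFunc K) (derivative r.denom) * hnum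

theorem num_denom_eq_of_X_mul_derivation_add_eq_X (hδ : δ X = 1) {c : K} {r : RatFunc K}
    (h : X * δ r + (C c - X) * r = X) :
    Polynomial.X * (derivative r.num * r.denom - r.num * derivative r.denom)
      + (Polynomial.C c - Polynomial.X) * (r.num * r.denom) = Polynomial.X * r.denom ^ 2 := by
  apply algebraMap_injective K
  have hnum := algebraMap_num_eq_mul_algebraMap_denom r
  have hd := algebraMap_denom_sq_mul_derivation hδ r
  simp only [map_add, map_mul, map_sub, map_pow, algebraMap_X, algebraMap_C] at hd ⊢
  linear_combination (algebraMap K[X] (RatFunc K) r.denom) ^ 2 * h - X * hd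
    + (C c - X) * algebraMap K[X] (RatFunc K) r.denom * hnum

end RatFunc

theorem no_rational_solution_incomplete_gamma_ode_general
    (F : Type*) [Field F] [CharZero F]
    (δ : Derivation F (RatFunc F) (RatFunc F)) (hδ : δ RatFunc.X = 1)
    (t : F) (ht : ∀ m : ℤ, (m : F) ≠ t - 1) :
    ¬ ∃ r : RatFunc F,
      RatFunc.X * δ r + (RatFunc.C (t - 1) - RatFunc.X) * r = RatFunc.X := by
  rintro ⟨r, hr⟩
  have hc (n : ℕ) : t - 1 ≠ n := fun h => ht n (by simp [h])
  exact r.isCoprime_num_denom.X_mul_derivative_sub_add_C_sub_X_mul_ne hc r.monic_denom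
    (RatFunc.num_denom_eq_of_X_mul_derivation_add_eq_X hδ hr)

/-- Over an algebraically closed field `F` of characteristic zero, if `t - 1` is not an
integer, then no rational function `r ∈ F(x)` satisfies `x·r' + (t-1-x)·r = x`. -/
theorem no_rational_solution_incomplete_gamma_ode
    (F : Type*) [Field F] [IsAlgClosed F] [CharZero F]
    (δ : Derivation F (RatFunc F) (RatFunc F)) (hδ : δ RatFunc.X = 1)
    (t : F) (ht : ∀ m : ℤ, (m : F) ≠ t - 1) :
    ¬ ∃ r : RatFunc F,
      RatFunc.X * δ r + (RatFunc.C (t - 1) - RatFunc.X) * r = RatFunc.X :=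
  no_rational_solution_incomplete_gamma_ode_general F δ hδ t ht
end

section
/- Let F be a field of characteristic zero and t ∈ F. If r ∈ F[x] is a polynomial divisible by x with r ≠ 0, then the polynomial x·r' + (t-1-x)·r has degree equal to deg(r) + 1, and in particular x·r' + (t-1-x)·r ≠ x. -/
open Polynomial

/-- If `r ∈ F[x]` is a nonzero polynomial divisible by `x` (with `F` of characteristic
zero), then `x·r' + (t-1-x)·r` has degree `deg r + 1`; in particular it is not `x`. -/
theorem degree_of_operator_on_polynomial_divisible_by_X
    (F : Type*) [Field F] [CharZero F] (t : F)
    (r : Polynomial F) (hr : r ≠ 0) (hdvd : Polynomial.X ∣ r) :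
    (Polynomial.X * r.derivative + (Polynomial.C (t - 1) - Polynomial.X) * r).natDegree
        = r.natDegree + 1 ∧
      Polynomial.X * r.derivative + (Polynomial.C (t - 1) - Polynomial.X) * r
        ≠ Polynomial.X := by
  set n := r.natDegree with hn
  set P := Polynomial.X * r.derivative + (Polynomial.C (t - 1) - Polynomial.X) * r with hP
  have hn1 : 1 ≤ n := by
    have := Polynomial.natDegree_le_of_dvd hdvd hr
    simpa using this
  have hcoeff : P.coeff (n + 1) = -r.leadingCoeff := by
    have h1 : (Polynomial.X * r.derivative).coeff (n + 1) = r.derivative.coeff n := by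
      simp [Polynomial.coeff_X_mul]
    have h2 : r.derivative.coeff n = 0 := by
      rw [Polynomial.coeff_derivative]
      have : r.coeff (n + 1) = 0 := Polynomial.coeff_natDegree_succ_eq_zero
      simp [this]
    have h3 : r.coeff (n + 1) = 0 := Polynomial.coeff_natDegree_succ_eq_zero
    simp only [hP, Polynomial.coeff_add, sub_mul, Polynomial.coeff_sub,
      Polynomial.coeff_X_mul, h1, h2, h3, Polynomial.coeff_C_mul, Polynomial.leadingCoeff]
    simp [hn, h3]
  have hlc : r.leadingCoeff ≠ 0 := Polynomial.leadingCoeff_ne_zero.mpr hr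
  have hcne : P.coeff (n + 1) ≠ 0 := by rw [hcoeff]; exact neg_ne_zero.mpr hlc
  have hle : P.natDegree ≤ n + 1 := by
    apply le_trans (Polynomial.natDegree_add_le _ _)
    apply max_le
    · apply le_trans (Polynomial.natDegree_mul_le)
      have := Polynomial.natDegree_derivative_le r
      simp only [Polynomial.natDegree_X]
      omega
    · apply le_trans (Polynomial.natDegree_mul_le)
      have h4 : (Polynomial.C (t - 1) - Polynomial.X).natDegree ≤ 1 := by
        apply le_trans (Polynomial.natDegree_sub_le _ _)
        rw [Polynomial.natDegree_C, Polynomial.natDegree_X]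
        omega
      omega
  have hdeg : P.natDegree = n + 1 :=
    le_antisymm hle (Polynomial.le_natDegree_of_ne_zero hcne)
  refine ⟨hdeg, fun h => ?_⟩
  rw [h] at hdeg
  simp [Polynomial.natDegree_X] at hdeg
  omega
end

section
/- Let E ⊆ Ẽ be an extension of fields of characteristic zero each equipped with a derivation δ, such that Ẽ and E have the same δ-constants. Let f_0, …, f_n ∈ Ẽ satisfy δf_j ∈ E for all j. If f_0, …, f_n are algebraically dependent over E, then there exist δ-constants c_0, …, c_n ∈ E^δ, not all zero, such that Σ_{j=0}^n c_j f_j ∈ E. -/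
/-!
Among the nonzero polynomial relations `P(f) = 0` with coefficients in `E`, take one whose
leading monomial, for some monomial order, is minimal, and make it monic. Applying `δ` to
`P(f) = 0` gives `Q(f) = 0` with `Q = P^δ + ∑ⱼ δ(fⱼ) ∂ⱼP`, where `P^δ` applies `δ` to the
coefficients. The coefficients of `Q` again lie in `E`, and all its monomials lie strictly below
the leading monomial of `P` (`δ` kills the leading coefficient `1`, and `∂ⱼ` lowers monomials),
so minimality forces `Q = 0`. Read at monomials of top total degree, `Q = 0` says that the top
coefficients of `P` are constants; read at `s` one degree lower, with `s + eₖ` in the support, it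
says `δ(P_s + ∑ⱼ cⱼ fⱼ) = 0` for the constants `cⱼ = (sⱼ + 1) P_{s+eⱼ}`, of which `cₖ ≠ 0`.
Hence `∑ⱼ cⱼ fⱼ ∈ E`, since `E` contains every constant.
-/

namespace MvPolynomial

variable {σ R A : Type*} [CommSemiring R] [CommSemiring A] [Algebra R A]

noncomputable def derivCoeffs (δ : Derivation R A A) (P : MvPolynomial σ A) : MvPolynomial σ A :=
  AddMonoidAlgebra.map δ.toAddMonoidHom P

variable (δ : Derivation R A A)

@[simp]
lemma coeff_derivCoeffs (P : MvPolynomial σ A) (s : σ →₀ ℕ) :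
    (derivCoeffs δ P).coeff s = δ (P.coeff s) := rfl

lemma derivCoeffs_add (P Q : MvPolynomial σ A) :
    derivCoeffs δ (P + Q) = derivCoeffs δ P + derivCoeffs δ Q :=
  AddMonoidAlgebra.map_add _ _ _

lemma derivCoeffs_C (a : A) : derivCoeffs δ (C a : MvPolynomial σ A) = C (δ a) := by
  classical
  ext s
  simp only [coeff_derivCoeffs, coeff_C]
  split_ifs <;> simp

lemma derivCoeffs_mul_X (P : MvPolynomial σ A) (i : σ) :
    derivCoeffs δ (P * X i) = derivCoeffs δ P * X i := by
  classical
  ext s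
  simp only [coeff_derivCoeffs, coeff_mul_X']
  split_ifs <;> simp

theorem derivation_eval [Fintype σ] (f : σ → A) (P : MvPolynomial σ A) :
    δ (eval f P) = eval f (derivCoeffs δ P) + ∑ j, δ (f j) * eval f (pderiv j P) := by
  classical
  induction P using MvPolynomial.induction_on with
  | C a => simp [derivCoeffs_C]
  | add P Q hP hQ =>
    simp only [map_add, derivCoeffs_add, hP, hQ, mul_add, Finset.sum_add_distrib]
    ring
  | mul_X P i hP =>
    have hpderiv (j : σ) : eval f (pderiv j (P * X i)) =
        eval f (pderiv j P) * f i + if i = j then eval f P else 0 := by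
      rw [Derivation.leibniz, pderiv_X, Pi.single_apply]
      split_ifs <;> simp [add_comm, mul_comm]
    simp only [hpderiv, mul_add, mul_ite, mul_zero, Finset.sum_add_distrib, Finset.sum_ite_eq,
      Finset.mem_univ, if_true]
    simp only [map_mul, eval_X, Derivation.leibniz, hP, derivCoeffs_mul_X, smul_eq_mul]
    simp only [← mul_assoc, ← Finset.sum_mul]
    ring

section ExtendDeriv

variable [Fintype σ]

/-- The derivation of `A[X]` extending `δ` with `X j ↦ g j`. -/
noncomputable def extendDeriv (g : σ → A) (P : MvPolynomial σ A) : MvPolynomial σ A :=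
  derivCoeffs δ P + ∑ j, C (g j) * pderiv j P

variable {δ}

lemma coeff_extendDeriv (g : σ → A) (P : MvPolynomial σ A) (s : σ →₀ ℕ) :
    (extendDeriv δ g P).coeff s =
      δ (P.coeff s) + ∑ j, g j * (P.coeff (s + Finsupp.single j 1) * (s j + 1)) := by
  simp only [extendDeriv, coeff_add, coeff_derivCoeffs, coeff_sum, coeff_C_mul, coeff_pderiv]

lemma eval_extendDeriv (f : σ → A) (P : MvPolynomial σ A) :
    eval f (extendDeriv δ (fun j => δ (f j)) P) = δ (eval f P) := by
  simp only [extendDeriv, derivation_eval, map_add, map_sum, map_mul, eval_C]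

open MonomialOrder in
lemma toSyn_lt_of_mem_support_extendDeriv (m : MonomialOrder σ) {g : σ → A}
    {P : MvPolynomial σ A} (hP : m.Monic P) {s : σ →₀ ℕ}
    (hs : s ∈ (extendDeriv δ g P).support) : s ≺[m] m.degree P := by
  by_contra! hle
  have hshift (j : σ) : P.coeff (s + Finsupp.single j 1) = 0 := by
    refine m.coeff_eq_zero_of_lt (hle.trans_lt (m.toSyn_strictMono ?_))
    exact lt_add_of_pos_right s (by simp [pos_iff_ne_zero])
  have hcoeff : δ (P.coeff s) = 0 := by
    rcases hle.eq_or_lt with heq | hlt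
    · rw [← m.toSyn.injective heq, hP.coeff_degree, Derivation.map_one_eq_zero]
    · rw [m.coeff_eq_zero_of_lt hlt, map_zero]
  apply mem_support_iff.mp hs
  simp [coeff_extendDeriv, hshift, hcoeff]

open MonomialOrder in
lemma degree_extendDeriv_lt (m : MonomialOrder σ) {g : σ → A} {P : MvPolynomial σ A}
    (hP : m.Monic P) (hQ : extendDeriv δ g P ≠ 0) :
    m.degree (extendDeriv δ g P) ≺[m] m.degree P :=
  toSyn_lt_of_mem_support_extendDeriv m hP (m.degree_mem_support hQ)

lemma derivation_coeff_eq_zero_of_extendDeriv_eq_zero {g : σ → A} {P : MvPolynomial σ A}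
    (hQ : extendDeriv δ g P = 0) {s : σ →₀ ℕ} (hs : ∀ j, P.coeff (s + Finsupp.single j 1) = 0) :
    δ (P.coeff s) = 0 := by
  simpa [coeff_extendDeriv, hs] using congr_arg (coeff s) hQ

lemma derivation_coeff_add_sum_eq_zero {f : σ → A} {P : MvPolynomial σ A}
    (hQ : extendDeriv δ (fun j => δ (f j)) P = 0) {s : σ →₀ ℕ}
    (hs : ∀ j, δ (P.coeff (s + Finsupp.single j 1)) = 0) :
    δ (P.coeff s + ∑ j, P.coeff (s + Finsupp.single j 1) * (s j + 1) * f j) = 0 := by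
  have hc (j : σ) : δ (P.coeff (s + Finsupp.single j 1) * (s j + 1)) = 0 := by
    simp [Derivation.leibniz, hs j]
  have hs0 := congr_arg (coeff s) hQ
  rw [coeff_extendDeriv, coeff_zero] at hs0
  rw [map_add, map_sum, ← hs0]
  congr 1
  refine Finset.sum_congr rfl fun j _ => ?_
  rw [Derivation.leibniz, hc, smul_zero, add_zero, smul_eq_mul, mul_comm]

end ExtendDeriv

section TotalDegree

lemma coeff_add_single_eq_zero_of_degree_eq_totalDegree {P : MvPolynomial σ A} {t : σ →₀ ℕ}
    (ht : t.degree = P.totalDegree) (i : σ) : P.coeff (t + Finsupp.single i 1) = 0 := by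
  by_contra h
  have hle : (t + Finsupp.single i 1).degree ≤ P.totalDegree :=
    le_totalDegree (mem_support_iff.mpr h)
  simp only [map_add, Finsupp.degree_single] at hle
  omega

lemma exists_add_single_mem_support_of_totalDegree_pos {P : MvPolynomial σ A}
    (hP : 0 < P.totalDegree) :
    ∃ s k, s + Finsupp.single k 1 ∈ P.support ∧
      (s + Finsupp.single k 1).degree = P.totalDegree := by
  obtain ⟨t, ht, hdeg⟩ := Finset.exists_mem_eq_sup P.support
    (Finset.nonempty_of_ne_empty (by rintro h; simp [totalDegree, h] at hP)) Finsupp.degree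
  have htot : P.totalDegree = t.degree := hdeg
  obtain ⟨k, hk⟩ : ∃ k, t k ≠ 0 := by
    by_contra! h
    rw [htot, (Finsupp.ext h : t = 0), map_zero] at hP
    exact lt_irrefl 0 hP
  refine ⟨t - Finsupp.single k 1, k, ?_⟩
  rw [tsub_add_cancel_of_le (Finsupp.single_le_iff.mpr (Nat.one_le_iff_ne_zero.mpr hk))]
  exact ⟨ht, htot.symm⟩

end TotalDegree

end MvPolynomial

open MvPolynomial

section Relation

variable {K σ : Type*} [Field K]

structure IsAlgebraicRelation (E : Subfield K) (f : σ → K) (P : MvPolynomial σ K) : Prop where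
  ne_zero : P ≠ 0
  coeff_mem (s : σ →₀ ℕ) : P.coeff s ∈ E
  eval_eq_zero : eval f P = 0

variable {E : Subfield K} {f : σ → K} {P : MvPolynomial σ K}

lemma exists_isAlgebraicRelation_of_not_algebraicIndependent (h : ¬ AlgebraicIndependent E f) :
    ∃ P, IsAlgebraicRelation E f P := by
  rw [algebraicIndependent_iff] at h
  push Not at h
  obtain ⟨p, hp, hp0⟩ := h
  refine ⟨MvPolynomial.map (algebraMap E K) p, ?_, fun s => ?_, ?_⟩
  · exact (map_injective _ (algebraMap E K).injective).ne_iff' (map_zero _) |>.mpr hp0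
  · rw [coeff_map]
    exact SetLike.coe_mem _
  · rwa [eval_map, ← aeval_def]

lemma IsAlgebraicRelation.totalDegree_pos (hP : IsAlgebraicRelation E f P) :
    0 < P.totalDegree := by
  by_contra! h
  have hC := totalDegree_eq_zero_iff_eq_C.mp (Nat.le_zero.mp h)
  have heval := hP.eval_eq_zero
  rw [hC, eval_C] at heval
  exact hP.ne_zero (by rw [hC, heval, C_0])

lemma IsAlgebraicRelation.smul (hP : IsAlgebraicRelation E f P) {c : K} (hc : c ∈ E)
    (hc0 : c ≠ 0) : IsAlgebraicRelation E f (c • P) := by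
  refine ⟨smul_ne_zero hc0 hP.ne_zero, fun s => ?_, ?_⟩
  · rw [coeff_smul, smul_eq_mul]
    exact E.mul_mem hc (hP.coeff_mem s)
  · rw [smul_eval, hP.eval_eq_zero, mul_zero]

open MonomialOrder in
lemma exists_monic_isAlgebraicRelation_minimal (m : MonomialOrder σ)
    (h : ∃ P, IsAlgebraicRelation E f P) :
    ∃ P, IsAlgebraicRelation E f P ∧ m.Monic P ∧
      ∀ Q, IsAlgebraicRelation E f Q → ¬ m.degree Q ≺[m] m.degree P := by
  obtain ⟨P, hP, hmin⟩ := (InvImage.wf (fun P => m.toSyn (m.degree P)) wellFounded_lt).has_min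
    {P | IsAlgebraicRelation E f P} h
  have hc : m.leadingCoeff P ≠ 0 := m.leadingCoeff_ne_zero_iff.mpr hP.ne_zero
  have hdeg : m.degree ((m.leadingCoeff P)⁻¹ • P) = m.degree P :=
    m.degree_smul_of_isRegular (IsRegular.of_ne_zero (inv_ne_zero hc))
  refine ⟨(m.leadingCoeff P)⁻¹ • P, hP.smul (E.inv_mem (hP.coeff_mem _)) (inv_ne_zero hc),
    ?_, ?_⟩
  · rw [Monic, leadingCoeff, hdeg, coeff_smul, smul_eq_mul]
    exact inv_mul_cancel₀ hc
  · rw [hdeg]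
    exact hmin

variable {R : Type*} [CommSemiring R] [Algebra R K] [Fintype σ] {δ : Derivation R K K}

open MonomialOrder in
lemma IsAlgebraicRelation.extendDeriv_eq_zero (m : MonomialOrder σ) (hδE : ∀ a ∈ E, δ a ∈ E)
    (hf : ∀ j, δ (f j) ∈ E) (hP : IsAlgebraicRelation E f P) (hmonic : m.Monic P)
    (hmin : ∀ Q, IsAlgebraicRelation E f Q → ¬ m.degree Q ≺[m] m.degree P) :
    extendDeriv δ (fun j => δ (f j)) P = 0 := by
  by_contra hQ
  refine hmin _ ⟨hQ, fun s => ?_, ?_⟩ (degree_extendDeriv_lt m hmonic hQ)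
  · rw [coeff_extendDeriv]
    refine E.add_mem (hδE _ (hP.coeff_mem s)) (E.sum_mem fun j _ => E.mul_mem (hf j) ?_)
    exact E.mul_mem (hP.coeff_mem _) (E.add_mem (natCast_mem E _) E.one_mem)
  · rw [eval_extendDeriv, hP.eval_eq_zero, map_zero]

theorem IsAlgebraicRelation.exists_constant_combination_mem [CharZero K]
    (hconst : ∀ c, δ c = 0 → c ∈ E) (hP : IsAlgebraicRelation E f P)
    (hQ : extendDeriv δ (fun j => δ (f j)) P = 0) :
    ∃ c : σ → K, (∀ j, c j ∈ E ∧ δ (c j) = 0) ∧ (∃ j, c j ≠ 0) ∧ ∑ j, c j * f j ∈ E := by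
  obtain ⟨s, k, hk, hdeg⟩ := exists_add_single_mem_support_of_totalDegree_pos hP.totalDegree_pos
  have htop (j : σ) : (s + Finsupp.single j 1).degree = P.totalDegree := by
    rw [← hdeg, map_add, map_add, Finsupp.degree_single, Finsupp.degree_single]
  have htopConst (j : σ) : δ (P.coeff (s + Finsupp.single j 1)) = 0 :=
    derivation_coeff_eq_zero_of_extendDeriv_eq_zero hQ
      (coeff_add_single_eq_zero_of_degree_eq_totalDegree (htop j))
  refine ⟨fun j => P.coeff (s + Finsupp.single j 1) * (s j + 1), fun j => ⟨?_, ?_⟩, ⟨k, ?_⟩, ?_⟩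
  · exact E.mul_mem (hP.coeff_mem _) (E.add_mem (natCast_mem E _) E.one_mem)
  · simp [Derivation.leibniz, htopConst j]
  · exact mul_ne_zero (mem_support_iff.mp hk) (Nat.cast_add_one_ne_zero _)
  · have hsum := E.sub_mem (hconst _ (derivation_coeff_add_sum_eq_zero hQ htopConst))
      (hP.coeff_mem s)
    rwa [add_sub_cancel_left] at hsum

end Relation

/-- Kolchin–Ostrowski (forward direction): if `E ⊆ Ẽ` is a δ-field extension of
characteristic zero with the same δ-constants, `f_0, …, f_n ∈ Ẽ` satisfy `δ f_j ∈ E`,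
and the `f_j` are algebraically dependent over `E`, then some nontrivial `E^δ`-linear
combination `Σ c_j f_j` lies in `E`. -/
theorem kolchin_ostrowski_forward
    (Mt : Type*) [Field Mt] [CharZero Mt] (δ : Derivation ℚ Mt Mt)
    (E : Subfield Mt) (hδE : ∀ a ∈ E, δ a ∈ E)
    (hconst : ∀ c : Mt, δ c = 0 → c ∈ E)
    (n : ℕ) (f : Fin (n + 1) → Mt) (hf : ∀ j, δ (f j) ∈ E)
    (hdep : ¬ AlgebraicIndependent E f) :
    ∃ c : Fin (n + 1) → Mt,
      (∀ j, c j ∈ E ∧ δ (c j) = 0) ∧ (∃ j, c j ≠ 0) ∧ (∑ j, c j * f j) ∈ E := by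
  obtain ⟨P, hP, hmonic, hmin⟩ := exists_monic_isAlgebraicRelation_minimal MonomialOrder.lex
    (exists_isAlgebraicRelation_of_not_algebraicIndependent hdep)
  exact hP.exists_constant_combination_mem hconst
    (hP.extendDeriv_eq_zero MonomialOrder.lex hδE hf hmonic hmin)
end
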